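/- arXiv:1112.5138 — 3 statements merged into one kernel-verified Lean document; each statement's English description precedes it below -/
import Mathlib

section
/- Let Ω ⊂ ℂⁿ be a bounded domain with smooth boundary which is convex. Then there exists an open neighborhood U of bΩ such that the signed distance function δ is a convex function on U ∩ Ω, i.e. its real Hessian satisfies H_δ(z)(V,V) ≥ 0 for all z ∈ U ∩ Ω and all V ∈ ℂⁿ. -/
noncomputable section

open Complex Metric Set
open scoped Classical RealInnerProductSpace

/-- Signed distance to the boundary of `Ω`: negative inside `Ω`, positive outside. -/
def sdist {n : ℕ} (Ω : Set (EuclideanSpace ℂ (Fin n))) (z : EuclideanSpace ℂ (Fin n)) : ℝ :=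
  if z ∈ Ω then -Metric.infDist z (frontier Ω) else Metric.infDist z (frontier Ω)

/-- `⟨∂f(p),V⟩ = Σ_k f_{z_k}(p) V_k`, the complex gradient pairing. -/
def dDir {n : ℕ} (f : EuclideanSpace ℂ (Fin n) → ℂ) (p V : EuclideanSpace ℂ (Fin n)) : ℂ :=
  (1/2 : ℂ) * (fderiv ℝ f p V - Complex.I * fderiv ℝ f p (Complex.I • V))

/-- `Σ_k f_{z̄_k}(p) conj (V_k)`, the conjugate gradient pairing. -/
def dbarDir {n : ℕ} (f : EuclideanSpace ℂ (Fin n) → ℂ) (p V : EuclideanSpace ℂ (Fin n)) : ℂ :=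
  (1/2 : ℂ) * (fderiv ℝ f p V + Complex.I * fderiv ℝ f p (Complex.I • V))

/-- Complex Hessian `L_f(p)(V,W) = Σ_{j,k} ∂²f/∂z_j∂z̄_k(p) V_j conj (W_k)`. -/
def cHess {n : ℕ} (f : EuclideanSpace ℂ (Fin n) → ℂ) (p V W : EuclideanSpace ℂ (Fin n)) : ℂ :=
  dDir (fun z => dbarDir f z W) p V

/-- Real Hessian `H_f(p)(V,W) = Σ_{j,k} ∂²f/∂x_j∂x_k(p) V_j W_k` in the underlying
real coordinates of `ℂⁿ ≅ ℝ^{2n}`. -/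
def rHess {n : ℕ} (f : EuclideanSpace ℂ (Fin n) → ℝ) (p V W : EuclideanSpace ℂ (Fin n)) : ℝ :=
  fderiv ℝ (fun z => fderiv ℝ f z W) p V

/-- `Ω ⊂ ℂⁿ` has smooth (`C^∞`) boundary: the signed distance function is smooth on an
open neighborhood of `frontier Ω` and has unit gradient there. -/
def HasSmoothBoundary {n : ℕ} (Ω : Set (EuclideanSpace ℂ (Fin n))) : Prop :=
  ∃ U : Set (EuclideanSpace ℂ (Fin n)), IsOpen U ∧ frontier Ω ⊆ U ∧
    ContDiffOn ℝ (⊤ : ℕ∞) (sdist Ω) U ∧ ∀ z ∈ U, ‖fderiv ℝ (sdist Ω) z‖ = 1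

/-! Write `A = D∇δ` for the Hessian operator of `δ`. Differentiating `|∇δ|² = 1` gives `A ∇δ = 0`,
so `∇δ` is constant along normal lines (Grönwall), and from `z ∈ Ω` close to `bΩ` the segment
`z + t ∇δ(z)`, `0 ≤ t ≤ dist(z, bΩ)`, ends at a point `p` with `δ(p) = 0`, i.e. `p ∈ bΩ`.
There `A` kills the normal and is nonnegative on the tangent space, hence positive semidefinite.
Differentiating `⟨A V, ∇δ⟩ = 0` and using the symmetry of `D³δ` gives `⟨A V, V⟩' = -|A V|² ≤ 0`
along the segment, so `⟨A(z) V, V⟩ ≥ ⟨A(p) V, V⟩ ≥ 0`. -/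

open Filter Topology InnerProductSpace
open scoped Gradient

theorem LinearMap.IsSymmetric.inner_map_self_nonneg_of_orthogonal {F : Type*}
    [NormedAddCommGroup F] [InnerProductSpace ℝ F] {A : F →ₗ[ℝ] F} (hA : A.IsSymmetric)
    {N : F} (hN : ‖N‖ = 1) (hAN : A N = 0) (h : ∀ W, ⟪N, W⟫ = 0 → 0 ≤ ⟪A W, W⟫) (V : F) :
    0 ≤ ⟪A V, V⟫ := by
  set W := V - ⟪N, V⟫ • N
  have hW : ⟪N, W⟫ = 0 := by
    rw [inner_sub_right, real_inner_smul_right, real_inner_self_eq_norm_sq, hN]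
    ring
  have hAW : A V = A W := by rw [map_sub, map_smul, hAN, smul_zero, sub_zero]
  have hWV : ⟪A W, V⟫ = ⟪A W, W⟫ := by
    rw [show V = W + ⟪N, V⟫ • N by simp [W], inner_add_right, real_inner_smul_right, hA W N, hAN,
      inner_zero_right, mul_zero, add_zero]
  rw [hAW, hWV]
  exact h W hW

section Calculus

variable {E G : Type*} [NormedAddCommGroup E] [NormedSpace ℝ E] [NormedAddCommGroup G]
  [NormedSpace ℝ G] {g : E → G} {p : E}

theorem fderiv_fderiv_apply_const (h : DifferentiableAt ℝ (fderiv ℝ g) p) (V W : E) :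
    fderiv ℝ (fun z => fderiv ℝ g z W) p V = fderiv ℝ (fderiv ℝ g) p V W := by
  simp [fderiv_clm_apply h (differentiableAt_const W)]

theorem ContDiffAt.fderiv_fderiv_apply_const_comm (hg : ContDiffAt ℝ 2 g p) (V W : E) :
    fderiv ℝ (fun z => fderiv ℝ g z W) p V = fderiv ℝ (fun z => fderiv ℝ g z V) p W := by
  have h : DifferentiableAt ℝ (fderiv ℝ g) p :=
    (hg.fderiv_right (m := 1) le_rfl).differentiableAt one_ne_zero
  rw [fderiv_fderiv_apply_const h, fderiv_fderiv_apply_const h]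
  exact hg.isSymmSndFDerivAt (by simp [minSmoothness_of_isRCLikeNormedField]) V W

theorem hasDerivAt_const_add_smul (z N : E) (t : ℝ) :
    HasDerivAt (fun s : ℝ => z + s • N) N t := by
  simpa using ((hasDerivAt_id t).smul_const N).const_add z

end Calculus

section Gradient

variable {F : Type*} [NormedAddCommGroup F] [InnerProductSpace ℝ F] [CompleteSpace F]
  {f : F → ℝ} {p : F}

theorem ContDiffAt.gradient {m n : WithTop ℕ∞} (hf : ContDiffAt ℝ n f p) (hmn : m + 1 ≤ n) :
    ContDiffAt ℝ m (∇ f) p :=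
  (toDual ℝ F).symm.toLinearIsometry.toContinuousLinearMap.contDiff.contDiffAt.comp p
    (hf.fderiv_right hmn)

theorem ContDiffAt.differentiableAt_gradient (hf : ContDiffAt ℝ 2 f p) :
    DifferentiableAt ℝ (∇ f) p :=
  (hf.gradient (m := 1) le_rfl).differentiableAt one_ne_zero

theorem ContDiffAt.differentiableAt_fderiv_gradient_apply (hf : ContDiffAt ℝ 3 f p) (V : F) :
    DifferentiableAt ℝ (fun z => fderiv ℝ (∇ f) z V) p :=
  (((hf.gradient (m := 2) (by norm_num)).fderiv_right (m := 1) (by norm_num)).differentiableAt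
    one_ne_zero).clm_apply (differentiableAt_const V)

theorem norm_gradient_eq_norm_fderiv (x : F) : ‖∇ f x‖ = ‖fderiv ℝ f x‖ :=
  (toDual ℝ F).symm.norm_map _

theorem fderiv_fderiv_apply_eq_inner (h : DifferentiableAt ℝ (∇ f) p) (V W : F) :
    fderiv ℝ (fun z => fderiv ℝ f z W) p V = ⟪fderiv ℝ (∇ f) p V, W⟫ := by
  have : (fun z => fderiv ℝ f z W) = fun z => ⟪∇ f z, W⟫ := by simp only [inner_gradient_left]
  rw [this, fderiv_inner_apply ℝ h (differentiableAt_const W)]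
  simp

theorem ContDiffAt.inner_fderiv_gradient_comm (hf : ContDiffAt ℝ 2 f p) (V W : F) :
    ⟪fderiv ℝ (∇ f) p V, W⟫ = ⟪V, fderiv ℝ (∇ f) p W⟫ := by
  have h := hf.differentiableAt_gradient
  rw [real_inner_comm (fderiv ℝ (∇ f) p W) V, ← fderiv_fderiv_apply_eq_inner h,
    ← fderiv_fderiv_apply_eq_inner h, hf.fderiv_fderiv_apply_const_comm]

theorem ContDiffAt.fderiv_inner_fderiv_gradient_comm (hf : ContDiffAt ℝ 3 f p) (a b c : F) :
    fderiv ℝ (fun z => ⟪fderiv ℝ (∇ f) z a, b⟫) p c =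
      fderiv ℝ (fun z => ⟪fderiv ℝ (∇ f) z c, b⟫) p a := by
  have hψ : ContDiffAt ℝ 2 (fun z => fderiv ℝ f z b) p :=
    (hf.fderiv_right (m := 2) le_rfl).clm_apply contDiffAt_const
  have hev : ∀ x, (fun z => ⟪fderiv ℝ (∇ f) z x, b⟫) =ᶠ[𝓝 p]
      fun z => fderiv ℝ (fun w => fderiv ℝ f w b) z x := by
    intro x
    filter_upwards [hf.eventually (by simp)] with z hz
    exact (fderiv_fderiv_apply_eq_inner (hz.of_le (by norm_num)).differentiableAt_gradient x b).symm
  rw [(hev a).fderiv_eq, (hev c).fderiv_eq, hψ.fderiv_fderiv_apply_const_comm]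

section UnitGradient

variable (hunit : ∀ᶠ z in 𝓝 p, ‖∇ f z‖ = 1)
include hunit

theorem inner_fderiv_gradient_apply_gradient (h : DifferentiableAt ℝ (∇ f) p) (V : F) :
    ⟪fderiv ℝ (∇ f) p V, ∇ f p⟫ = 0 := by
  have hconst : (fun z => ⟪∇ f z, ∇ f z⟫) =ᶠ[𝓝 p] fun _ => (1 : ℝ) := by
    filter_upwards [hunit] with z hz
    rw [real_inner_self_eq_norm_sq, hz, one_pow]
  have h0 := fderiv_inner_apply ℝ h h V
  rw [hconst.fderiv_eq, fderiv_const_apply, zero_apply, real_inner_comm (∇ f p)] at h0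
  rw [real_inner_comm (∇ f p)]
  linarith

theorem ContDiffAt.fderiv_gradient_apply_gradient (hf : ContDiffAt ℝ 2 f p) :
    fderiv ℝ (∇ f) p (∇ f p) = 0 := by
  rw [← inner_self_eq_zero (𝕜 := ℝ), ← hf.inner_fderiv_gradient_comm]
  exact inner_fderiv_gradient_apply_gradient hunit hf.differentiableAt_gradient _

/-- The Riccati equation `A' = -A²` for the Hessian `A` along the normal lines. -/
theorem ContDiffAt.fderiv_inner_fderiv_gradient_apply_gradient (hf : ContDiffAt ℝ 3 f p)
    (V : F) :
    fderiv ℝ (fun z => ⟪fderiv ℝ (∇ f) z V, V⟫) p (∇ f p) = -‖fderiv ℝ (∇ f) p V‖ ^ 2 := by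
  have hAV := hf.differentiableAt_fderiv_gradient_apply V
  have hsymm : (fun z => ⟪fderiv ℝ (∇ f) z (∇ f p), V⟫) =ᶠ[𝓝 p]
      fun z => ⟪fderiv ℝ (∇ f) z V, ∇ f p⟫ := by
    filter_upwards [hf.eventually (by simp)] with z hz
    rw [(hz.of_le (by norm_num)).inner_fderiv_gradient_comm, real_inner_comm]
  have hker : (fun z => ⟪fderiv ℝ (∇ f) z V, ∇ f z⟫) =ᶠ[𝓝 p] fun _ => (0 : ℝ) := by
    filter_upwards [hunit.eventually_nhds, hf.eventually (by simp)] with z hzunit hz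
    exact inner_fderiv_gradient_apply_gradient hzunit
      (hz.of_le (by norm_num)).differentiableAt_gradient V
  have h0 := fderiv_inner_apply ℝ hAV (hf.of_le (by norm_num)).differentiableAt_gradient V
  rw [hker.fderiv_eq, fderiv_const_apply, zero_apply] at h0
  rw [hf.fderiv_inner_fderiv_gradient_comm, hsymm.fderiv_eq,
    fderiv_inner_apply ℝ hAV (differentiableAt_const _) V, ← real_inner_self_eq_norm_sq]
  simp only [fderiv_const_apply, zero_apply, inner_zero_right, zero_add]
  linarith

end UnitGradient

section NormalLine

variable {U : Set F} (hU : IsOpen U) (hunit : ∀ z ∈ U, ‖∇ f z‖ = 1) {z : F} {T : ℝ}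
  (hseg : ∀ t ∈ Icc 0 T, z + t • ∇ f z ∈ U)
include hU hunit hseg

theorem gradient_add_smul_gradient (hf : ContDiffOn ℝ 2 f U) :
    ∀ t ∈ Icc 0 T, ∇ f (z + t • ∇ f z) = ∇ f z := by
  set N := ∇ f z
  have hf' : ∀ t ∈ Icc 0 T, ContDiffAt ℝ 2 f (z + t • N) := fun t ht =>
    hf.contDiffAt (hU.mem_nhds (hseg t ht))
  have hderiv : ∀ t ∈ Icc 0 T, HasDerivAt (fun s : ℝ => ∇ f (z + s • N) - N)
      (fderiv ℝ (∇ f) (z + t • N) N) t := fun t ht => by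
    exact ((hf' t ht).differentiableAt_gradient.hasFDerivAt.comp_hasDerivAt t
      (hasDerivAt_const_add_smul z N t)).sub_const N
  obtain ⟨C, hC⟩ : ∃ C, ∀ t ∈ Icc 0 T, ‖fderiv ℝ (∇ f) (z + t • N)‖ ≤ C := by
    refine isCompact_Icc.exists_bound_of_continuousOn fun t ht => ContinuousAt.continuousWithinAt ?_
    refine ContinuousAt.comp (g := fderiv ℝ (∇ f)) ?_ (by fun_prop)
    exact (((hf' t ht).gradient (m := 1) le_rfl).fderiv_right (m := 0) le_rfl).continuousAt
  -- Since the Hessian kills the gradient, `∇ f (z + t • N) - N` satisfies a linear ODE.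
  have hbound : ∀ t ∈ Ico 0 T,
      ‖fderiv ℝ (∇ f) (z + t • N) N‖ ≤ C * ‖∇ f (z + t • N) - N‖ := fun t ht => by
    have ht := Ico_subset_Icc_self ht
    have hker := (hf' t ht).fderiv_gradient_apply_gradient
      (eventually_of_mem (hU.mem_nhds (hseg t ht)) hunit)
    calc ‖fderiv ℝ (∇ f) (z + t • N) N‖
        = ‖fderiv ℝ (∇ f) (z + t • N) (∇ f (z + t • N) - N)‖ := by
          rw [map_sub, hker, zero_sub, norm_neg]
      _ ≤ C * ‖∇ f (z + t • N) - N‖ :=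
          (ContinuousLinearMap.le_opNorm _ _).trans (by gcongr; exact hC t ht)
  intro t ht
  refine sub_eq_zero.mp (eq_zero_of_abs_deriv_le_mul_abs_self_of_eq_zero_right
    (fun s hs => (hderiv s hs).continuousAt.continuousWithinAt)
    (fun s hs => (hderiv s (Ico_subset_Icc_self hs)).hasDerivWithinAt) ?_ hbound t ht)
  simp [N]

theorem apply_add_smul_gradient (hf : ContDiffOn ℝ 2 f U) (hT : 0 ≤ T) :
    f (z + T • ∇ f z) = f z + T := by
  set N := ∇ f z
  have hderiv : ∀ t ∈ Icc 0 T, HasDerivAt (fun s : ℝ => f (z + s • N) - s) 0 t := fun t ht => by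
    have hdiff := (hf.contDiffAt (hU.mem_nhds (hseg t ht))).differentiableAt two_ne_zero
    refine ((hdiff.hasFDerivAt.comp_hasDerivAt t (hasDerivAt_const_add_smul z N t)).sub
      (hasDerivAt_id t)).congr_deriv ?_
    rw [← inner_gradient_left, gradient_add_smul_gradient hU hunit hseg hf t ht,
      real_inner_self_eq_norm_sq, hunit z (by simpa using hseg 0 ⟨le_rfl, hT⟩)]
    norm_num
  have := constant_of_has_deriv_right_zero
    (fun s hs => (hderiv s hs).continuousAt.continuousWithinAt)
    (fun s hs => (hderiv s (Ico_subset_Icc_self hs)).hasDerivWithinAt) T ⟨hT, le_rfl⟩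
  simp only [zero_smul, add_zero, sub_zero] at this
  linarith

theorem inner_fderiv_gradient_add_smul_gradient_le (hf : ContDiffOn ℝ 3 f U) (hT : 0 ≤ T)
    (V : F) :
    ⟪fderiv ℝ (∇ f) (z + T • ∇ f z) V, V⟫ ≤ ⟪fderiv ℝ (∇ f) z V, V⟫ := by
  set N := ∇ f z
  have hderiv : ∀ t ∈ Icc 0 T, HasDerivAt (fun s : ℝ => ⟪fderiv ℝ (∇ f) (z + s • N) V, V⟫)
      (-‖fderiv ℝ (∇ f) (z + t • N) V‖ ^ 2) t := fun t ht => by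
    have hf' := hf.contDiffAt (hU.mem_nhds (hseg t ht))
    have hq : DifferentiableAt ℝ (fun w => ⟪fderiv ℝ (∇ f) w V, V⟫) (z + t • N) :=
      (hf'.differentiableAt_fderiv_gradient_apply V).inner ℝ (differentiableAt_const V)
    refine (hq.hasFDerivAt.comp_hasDerivAt t (hasDerivAt_const_add_smul z N t)).congr_deriv ?_
    rw [← hf'.fderiv_inner_fderiv_gradient_apply_gradient
        (eventually_of_mem (hU.mem_nhds (hseg t ht)) hunit),
      gradient_add_smul_gradient hU hunit hseg (hf.of_le (by norm_num)) t ht]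
  have hanti : AntitoneOn (fun s : ℝ => ⟪fderiv ℝ (∇ f) (z + s • N) V, V⟫) (Icc 0 T) :=
    antitoneOn_of_hasDerivWithinAt_nonpos (convex_Icc 0 T)
      (fun s hs => (hderiv s hs).continuousAt.continuousWithinAt)
      (fun s hs => (hderiv s (interior_subset hs)).hasDerivWithinAt)
      (fun s _ => neg_nonpos.mpr (sq_nonneg _))
  simpa using hanti ⟨le_rfl, hT⟩ ⟨hT, le_rfl⟩ hT

end NormalLine

theorem ContDiffAt.inner_fderiv_gradient_self_nonneg (hf : ContDiffAt ℝ 2 f p)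
    (hunit : ∀ᶠ z in 𝓝 p, ‖∇ f z‖ = 1)
    (htan : ∀ V, fderiv ℝ f p V = 0 → 0 ≤ fderiv ℝ (fun z => fderiv ℝ f z V) p V) (V : F) :
    0 ≤ ⟪fderiv ℝ (∇ f) p V, V⟫ := by
  refine LinearMap.IsSymmetric.inner_map_self_nonneg_of_orthogonal
    (A := (fderiv ℝ (∇ f) p : F →ₗ[ℝ] F)) hf.inner_fderiv_gradient_comm hunit.self_of_nhds
    (hf.fderiv_gradient_apply_gradient hunit) (fun W hW => ?_) V
  rw [inner_gradient_left] at hW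
  rw [ContinuousLinearMap.coe_coe, ← fderiv_fderiv_apply_eq_inner hf.differentiableAt_gradient]
  exact htan W hW

end Gradient

theorem Metric.exists_isOpen_closedBall_infDist_subset {X : Type*} [PseudoMetricSpace X]
    {s U₀ : Set X} (hU₀ : IsOpen U₀) (hs : s ⊆ U₀) :
    ∃ U, IsOpen U ∧ s ⊆ U ∧ ∀ z ∈ U, closedBall z (infDist z s) ⊆ U₀ := by
  choose! r hr₀ hr using fun p hp => Metric.isOpen_iff.mp hU₀ p (hs hp)
  refine ⟨⋃ p ∈ s, ball p (r p / 2), isOpen_biUnion fun _ _ => isOpen_ball,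
    fun p hp => mem_biUnion hp (mem_ball_self (half_pos (hr₀ p hp))), ?_⟩
  simp only [mem_iUnion, mem_ball]
  rintro z ⟨p, hp, hzp⟩ y hy
  refine hr p hp (mem_ball.mpr ?_)
  calc dist y p ≤ dist y z + dist z p := dist_triangle y z p
    _ ≤ infDist z s + dist z p := by gcongr; exact mem_closedBall.mp hy
    _ ≤ dist z p + dist z p := by gcongr; exact infDist_le_dist_of_mem hp
    _ < r p := by linarith

theorem sdist_of_mem {n : ℕ} {Ω : Set (EuclideanSpace ℂ (Fin n))} {z : EuclideanSpace ℂ (Fin n)}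
    (hz : z ∈ Ω) : sdist Ω z = -infDist z (frontier Ω) :=
  if_pos hz

theorem mem_frontier_of_sdist_eq_zero {n : ℕ} {Ω : Set (EuclideanSpace ℂ (Fin n))}
    {z : EuclideanSpace ℂ (Fin n)} (hne : (frontier Ω).Nonempty) (hz : sdist Ω z = 0) :
    z ∈ frontier Ω := by
  refine (isClosed_frontier.mem_iff_infDist_zero hne).mpr ?_
  unfold sdist at hz
  split_ifs at hz <;> linarith

theorem signed_distance_convex_inside_general {n : ℕ} (Ω : Set (EuclideanSpace ℂ (Fin n)))
    (hsmooth : HasSmoothBoundary Ω)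
    (hconv : ∀ p ∈ frontier Ω, ∀ V : EuclideanSpace ℂ (Fin n),
      fderiv ℝ (sdist Ω) p V = 0 → 0 ≤ rHess (sdist Ω) p V V) :
    ∃ U : Set (EuclideanSpace ℂ (Fin n)), IsOpen U ∧ frontier Ω ⊆ U ∧
      ∀ z ∈ U ∩ Ω, ∀ V : EuclideanSpace ℂ (Fin n), 0 ≤ rHess (sdist Ω) z V V := by
  obtain ⟨U₀, hU₀, hbU₀, hsmooth, hunit⟩ := hsmooth
  replace hunit : ∀ w ∈ U₀, ‖∇ (sdist Ω) w‖ = 1 := fun w hw =>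
    (norm_gradient_eq_norm_fderiv w).trans (hunit w hw)
  have hsmooth3 : ContDiffOn ℝ 3 (sdist Ω) U₀ := hsmooth.of_le (WithTop.coe_le_coe.mpr le_top)
  have hC2 : ∀ w ∈ U₀, ContDiffAt ℝ 2 (sdist Ω) w := fun w hw =>
    (hsmooth3.contDiffAt (hU₀.mem_nhds hw)).of_le (by norm_num)
  rcases (frontier Ω).eq_empty_or_nonempty with hempty | hne
  · exact ⟨∅, isOpen_empty, hempty.subset, by simp⟩
  obtain ⟨U, hU, hbU, hball⟩ := exists_isOpen_closedBall_infDist_subset hU₀ hbU₀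
  refine ⟨U, hU, hbU, ?_⟩
  rintro z ⟨hzU, hzΩ⟩ V
  set T := infDist z (frontier Ω)
  have hT : 0 ≤ T := infDist_nonneg
  have hzU₀ : z ∈ U₀ := hball z hzU (mem_closedBall_self hT)
  have hseg : ∀ t ∈ Icc 0 T, z + t • ∇ (sdist Ω) z ∈ U₀ := fun t ht => by
    refine hball z hzU (mem_closedBall.mpr ?_)
    simpa [norm_smul, hunit z hzU₀, abs_of_nonneg ht.1] using ht.2
  set p := z + T • ∇ (sdist Ω) z
  have hp : p ∈ frontier Ω := by
    refine mem_frontier_of_sdist_eq_zero hne ?_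
    rw [apply_add_smul_gradient hU₀ hunit hseg (hsmooth3.of_le (by norm_num)) hT, sdist_of_mem hzΩ]
    ring
  rw [rHess, fderiv_fderiv_apply_eq_inner (hC2 z hzU₀).differentiableAt_gradient]
  calc 0 ≤ ⟪fderiv ℝ (∇ (sdist Ω)) p V, V⟫ :=
        (hC2 p (hbU₀ hp)).inner_fderiv_gradient_self_nonneg
          (eventually_of_mem (hU₀.mem_nhds (hbU₀ hp)) hunit) (hconv p hp) V
    _ ≤ ⟪fderiv ℝ (∇ (sdist Ω)) z V, V⟫ :=
        inner_fderiv_gradient_add_smul_gradient_le hU₀ hunit hseg hsmooth3 hT V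

/-- If `Ω` is a smoothly bounded convex domain, then the signed distance function `δ` is
convex on `U ∩ Ω` for some neighborhood `U` of `bΩ`. -/
theorem signed_distance_convex_inside {n : ℕ} (Ω : Set (EuclideanSpace ℂ (Fin n)))
    (hopen : IsOpen Ω) (hconn : IsConnected Ω) (hbdd : Bornology.IsBounded Ω)
    (hsmooth : HasSmoothBoundary Ω)
    (hconv : ∀ p ∈ frontier Ω, ∀ V : EuclideanSpace ℂ (Fin n),
      fderiv ℝ (sdist Ω) p V = 0 → 0 ≤ rHess (sdist Ω) p V V) :
    ∃ U : Set (EuclideanSpace ℂ (Fin n)), IsOpen U ∧ frontier Ω ⊆ U ∧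
      ∀ z ∈ U ∩ Ω, ∀ V : EuclideanSpace ℂ (Fin n), 0 ≤ rHess (sdist Ω) z V V :=
  signed_distance_convex_inside_general Ω hsmooth hconv
end
end

section
/- Let Ω ⊂ ℂⁿ be a bounded domain with smooth boundary and suppose the complex Hessian of the signed distance function satisfies L_δ(z)(V,V) ≥ 0 for all z ∈ bΩ and all V in the real tangent space ℝT_z(bΩ). Then in fact L_δ(z)(W,W) ≥ 0 for all z ∈ bΩ and all W ∈ ℂⁿ. -/
noncomputable section

open Complex Metric Set
open scoped Classical RealInnerProductSpace

/-!
The complex Hessian is sesquilinear, so `L_δ(z)(cW, cW) = |c|² L_δ(z)(W, W)` for every `c ∈ ℂ`.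
Since `dδ(z)` is only real-linear, its kernel meets the complex line `ℂ W` in a nonzero vector
`c W`, and nonnegativity at `c W` transfers to `W`.
-/

open Complex

namespace ContinuousLinearMap

variable {E : Type*} [NormedAddCommGroup E] [NormedSpace ℂ E]

theorem map_complex_smul {F : Type*} [NormedAddCommGroup F] [NormedSpace ℝ F]
    (L : E →L[ℝ] F) (c : ℂ) (v : E) : L (c • v) = c.re • L v + c.im • L (I • v) := by
  conv_lhs => rw [← re_add_im c]
  rw [add_smul, mul_smul, coe_smul, coe_smul, map_add, map_smul, map_smul]

/- `v ↦ L v - I * L (I • v)` and `v ↦ L v + I * L (I • v)` are twice the `ℂ`-linear and the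
`ℂ`-antilinear part of `L`. -/
theorem map_complex_smul_sub_I_mul (L : E →L[ℝ] ℂ) (c : ℂ) (v : E) :
    L (c • v) - I * L (I • c • v) = c * (L v - I * L (I • v)) := by
  rw [smul_comm I c v, map_complex_smul L c v, map_complex_smul L c (I • v), smul_smul, I_mul_I,
    neg_one_smul, map_neg]
  conv_rhs => rw [← re_add_im c]
  simp only [real_smul]
  linear_combination (c.im * L (I • v)) * I_sq

theorem map_complex_smul_add_I_mul (L : E →L[ℝ] ℂ) (c : ℂ) (v : E) :
    L (c • v) + I * L (I • c • v) = (starRingEnd ℂ) c * (L v + I * L (I • v)) := by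
  rw [smul_comm I c v, map_complex_smul L c v, map_complex_smul L c (I • v), smul_smul, I_mul_I,
    neg_one_smul, map_neg]
  conv_rhs => rw [← re_add_im c]
  simp only [real_smul, map_add, map_mul, conj_ofReal, conj_I]
  linear_combination (c.im * L (I • v)) * I_sq

theorem exists_ne_zero_complex_smul_mem_ker (ℓ : E →L[ℝ] ℝ) (w : E) :
    ∃ c : ℂ, c ≠ 0 ∧ ℓ (c • w) = 0 := by
  by_cases hw : ℓ w = 0
  · exact ⟨1, one_ne_zero, by rwa [one_smul]⟩
  · refine ⟨ℓ (I • w) - ℓ w * I, fun h => hw ?_, ?_⟩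
    · simpa using congr_arg im h
    · rw [map_complex_smul]
      simp only [sub_re, ofReal_re, mul_re, I_re, ofReal_im, I_im, sub_im, mul_im, smul_eq_mul]
      ring

end ContinuousLinearMap

section ComplexHessian

variable {n : ℕ}

theorem dDir_smul (g : EuclideanSpace ℂ (Fin n) → ℂ) (p V : EuclideanSpace ℂ (Fin n)) (c : ℂ) :
    dDir g p (c • V) = c * dDir g p V := by
  rw [dDir, dDir, (fderiv ℝ g p).map_complex_smul_sub_I_mul]
  ring

theorem dbarDir_smul (g : EuclideanSpace ℂ (Fin n) → ℂ) (p V : EuclideanSpace ℂ (Fin n)) (c : ℂ) :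
    dbarDir g p (c • V) = (starRingEnd ℂ) c * dbarDir g p V := by
  rw [dbarDir, dbarDir, (fderiv ℝ g p).map_complex_smul_add_I_mul]
  ring

theorem dDir_const_mul (c : ℂ) (g : EuclideanSpace ℂ (Fin n) → ℂ) (p V : EuclideanSpace ℂ (Fin n)) :
    dDir (fun z => c * g z) p V = c * dDir g p V := by
  have hderiv : fderiv ℝ (fun z => c * g z) p = c • fderiv ℝ g p :=
    congr_fun (fderiv_const_smul_field (𝕜 := ℝ) (f := g) c) p
  simp only [dDir, hderiv, smul_apply, smul_eq_mul]
  ring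

theorem cHess_smul_smul (f : EuclideanSpace ℂ (Fin n) → ℂ) (p V W : EuclideanSpace ℂ (Fin n))
    (c d : ℂ) : cHess f p (c • V) (d • W) = c * (starRingEnd ℂ) d * cHess f p V W := by
  simp only [cHess, dbarDir_smul, dDir_const_mul, dDir_smul]
  ring

theorem re_cHess_smul_smul_self (f : EuclideanSpace ℂ (Fin n) → ℂ) (p W : EuclideanSpace ℂ (Fin n))
    (c : ℂ) : (cHess f p (c • W) (c • W)).re = normSq c * (cHess f p W W).re := by
  rw [cHess_smul_smul, mul_conj, re_ofReal_mul]

end ComplexHessian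

theorem levi_form_nonneg_spreads_to_all_directions_general {n : ℕ} (Ω : Set (EuclideanSpace ℂ (Fin n)))
    (hpsh : ∀ z ∈ frontier Ω, ∀ V : EuclideanSpace ℂ (Fin n),
      fderiv ℝ (sdist Ω) z V = 0 → 0 ≤ (cHess (fun w => ((sdist Ω w : ℝ) : ℂ)) z V V).re) :
    ∀ z ∈ frontier Ω, ∀ W : EuclideanSpace ℂ (Fin n), 0 ≤ (cHess (fun w => ((sdist Ω w : ℝ) : ℂ)) z W W).re := by
  intro z hz W
  obtain ⟨c, hc, htangent⟩ := (fderiv ℝ (sdist Ω) z).exists_ne_zero_complex_smul_mem_ker W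
  have hnonneg := hpsh z hz (c • W) htangent
  rw [re_cHess_smul_smul_self] at hnonneg
  exact nonneg_of_mul_nonneg_right hnonneg (normSq_pos.mpr hc)

/-- If the complex Hessian of `δ` is nonnegative on the real tangent space at each
boundary point, then it is nonnegative on all of `ℂⁿ` at each boundary point. -/
theorem levi_form_nonneg_spreads_to_all_directions {n : ℕ} (Ω : Set (EuclideanSpace ℂ (Fin n)))
    (hopen : IsOpen Ω) (hconn : IsConnected Ω) (hbdd : Bornology.IsBounded Ω)
    (hsmooth : HasSmoothBoundary Ω)
    (hpsh : ∀ z ∈ frontier Ω, ∀ V : EuclideanSpace ℂ (Fin n),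
      fderiv ℝ (sdist Ω) z V = 0 → 0 ≤ (cHess (fun w => ((sdist Ω w : ℝ) : ℂ)) z V V).re) :
    ∀ z ∈ frontier Ω, ∀ W : EuclideanSpace ℂ (Fin n), 0 ≤ (cHess (fun w => ((sdist Ω w : ℝ) : ℂ)) z W W).re :=
  levi_form_nonneg_spreads_to_all_directions_general Ω hpsh
end
end

section
/- Let Ω ⊂ ℂⁿ be a bounded domain with smooth boundary and suppose the complex Hessian of the signed distance function satisfies L_δ(z)(V,V) ≥ 0 for all z ∈ bΩ and all V in the real tangent space ℝT_z(bΩ). Then there exists an open neighborhood U of bΩ such that δ is plurisubharmonic on U ∩ Ω, i.e. L_δ(z)(V,V) ≥ 0 for all z ∈ U ∩ Ω and all V ∈ ℂⁿ. -/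
/-!
Let `z ∈ Ω` be close to `bΩ` and `p ∈ bΩ` a nearest boundary point. Since `|∇δ| = 1` and `δ`
increases by exactly `|p - z|` from `z` to `p`, the gradient of `δ` is the unit vector `u` along
the segment `[z, p]`. Differentiating `|∇δ|² = 1` twice gives `D³δ(∇δ, W, W) = -|D²δ W|²`, so
`t ↦ D²δ(z + t u)(W, W)` is nonincreasing and the Levi form at `z` dominates the Levi form at `p`.
At `p` the Levi form is nonnegative on all of `ℂⁿ`: it is Hermitian, so it scales by `|λ|²` under
`V ↦ λ V`, and every complex line meets the real tangent hyperplane in a nonzero vector.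
-/

noncomputable section

open Complex Metric Set
open scoped Classical RealInnerProductSpace

open scoped Topology

section LeviForm

variable {E : Type*} [NormedAddCommGroup E] [NormedSpace ℝ E] [Module ℂ E] [IsScalarTower ℝ ℂ E]

def leviQuadratic (B : E →L[ℝ] E →L[ℝ] ℝ) (V : E) : ℝ :=
  B V V + B (I • V) (I • V)

lemma leviQuadratic_add_I_smul {B : E →L[ℝ] E →L[ℝ] ℝ} (hB : ∀ v w, B v w = B w v)
    (a b : ℝ) (V : E) :
    leviQuadratic B (a • V + b • I • V) = (a ^ 2 + b ^ 2) * leviQuadratic B V := by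
  have hI : I • I • V = -V := by rw [smul_smul, I_mul_I, neg_one_smul]
  simp only [leviQuadratic, smul_add, smul_comm I a, smul_comm I b, hI, map_add, map_smul,
    map_neg, add_apply, smul_apply, neg_apply, smul_eq_mul, hB (I • V) V]
  ring

lemma leviQuadratic_nonneg_of_nonneg_on_ker {B : E →L[ℝ] E →L[ℝ] ℝ}
    (hB : ∀ v w, B v w = B w v) (φ : E →L[ℝ] ℝ)
    (hφ : ∀ W, φ W = 0 → 0 ≤ leviQuadratic B W) (V : E) : 0 ≤ leviQuadratic B V := by
  set a := φ (I • V)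
  set b := -φ V
  have hker : φ (a • V + b • I • V) = 0 := by
    simp only [map_add, map_smul, smul_eq_mul, a, b]; ring
  have key := hφ _ hker
  rw [leviQuadratic_add_I_smul hB] at key
  rcases (add_nonneg (sq_nonneg a) (sq_nonneg b)).eq_or_lt with h0 | hpos
  · have hV : φ V = 0 := by nlinarith [sq_nonneg a, sq_nonneg b]
    exact hφ V hV
  · exact nonneg_of_mul_nonneg_right (by linarith) hpos

end LeviForm

section ComplexHessian

variable {n : ℕ} {δ : EuclideanSpace ℂ (Fin n) → ℝ} {y : EuclideanSpace ℂ (Fin n)}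

lemma fderiv_dbarDir_ofReal (hδ : ∀ᶠ x in 𝓝 y, DifferentiableAt ℝ δ x)
    (hδ' : DifferentiableAt ℝ (fderiv ℝ δ) y) (V W : EuclideanSpace ℂ (Fin n)) :
    fderiv ℝ (fun x => dbarDir (fun w => (δ w : ℂ)) x W) y V =
      (1 / 2 : ℂ) * (fderiv ℝ (fderiv ℝ δ) y V W + I * fderiv ℝ (fderiv ℝ δ) y V (I • W)) := by
  have happly : ∀ W, HasFDerivAt (fun x => (fderiv ℝ δ x W : ℂ))
      (ofRealCLM.comp ((fderiv ℝ (fderiv ℝ δ) y).flip W)) y := fun W =>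
    ofRealCLM.hasFDerivAt.comp y (by simpa using hδ'.hasFDerivAt.clm_apply (hasFDerivAt_const W y))
  have hev : (fun x => dbarDir (fun w => (δ w : ℂ)) x W) =ᶠ[𝓝 y]
      fun x => (1 / 2 : ℂ) * ((fderiv ℝ δ x W : ℂ) + I * (fderiv ℝ δ x (I • W) : ℂ)) := by
    filter_upwards [hδ] with x hx
    have hx' : HasFDerivAt (fun w => (δ w : ℂ)) (ofRealCLM.comp (fderiv ℝ δ x)) x :=
      ofRealCLM.hasFDerivAt.comp x hx.hasFDerivAt
    rw [dbarDir, hx'.fderiv]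
    rfl
  have hd : HasFDerivAt
      (fun x => (1 / 2 : ℂ) * ((fderiv ℝ δ x W : ℂ) + I * (fderiv ℝ δ x (I • W) : ℂ))) _ y :=
    ((happly W).add ((happly (I • W)).const_mul I)).const_mul _
  rw [hev.fderiv_eq, hd.fderiv]
  simp [mul_add]

lemma re_cHess_ofReal (hδ : ContDiffAt ℝ 2 δ y) (V : EuclideanSpace ℂ (Fin n)) :
    (cHess (fun w => (δ w : ℂ)) y V V).re = leviQuadratic (fderiv ℝ (fderiv ℝ δ) y) V / 4 := by
  have hδ₁ : ∀ᶠ x in 𝓝 y, DifferentiableAt ℝ δ x :=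
    (hδ.eventually (by simp)).mono fun x hx => hx.differentiableAt (by norm_num)
  have hδ₂ : DifferentiableAt ℝ (fderiv ℝ δ) y :=
    (hδ.fderiv_right (m := 1) le_rfl).differentiableAt one_ne_zero
  rw [cHess, dDir, fderiv_dbarDir_ofReal hδ₁ hδ₂, fderiv_dbarDir_ofReal hδ₁ hδ₂]
  simp only [leviQuadratic, one_div, mul_re, inv_re, re_ofNat, normSq_ofNat, div_self_mul_self',
    sub_re, add_re, ofReal_re, I_re, zero_mul, I_im, ofReal_im, mul_zero, sub_self, add_zero,
    inv_im, im_ofNat, neg_zero, zero_div, add_im, mul_im, one_mul, zero_add, sub_zero, zero_sub,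
    sub_neg_eq_add, sub_im]
  ring

end ComplexHessian

lemma hasDerivAt_eq_of_le_of_sub_eq {f f' : ℝ → ℝ} {a b C : ℝ}
    (hf : ∀ x ∈ Icc a b, HasDerivAt f (f' x) x) (hle : ∀ x ∈ Ioo a b, f' x ≤ C)
    (hab : f b - f a = C * (b - a)) {x : ℝ} (hx : x ∈ Ioo a b) : f' x = C := by
  have hmvt := (convex_Icc a b).image_sub_le_mul_sub_of_deriv_le
    (fun t ht => (hf t ht).continuousAt.continuousWithinAt)
    (fun t ht => (hf t (interior_subset ht)).differentiableAt.differentiableWithinAt)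
    (fun t ht => by
      rw [interior_Icc] at ht
      rw [(hf t (Ioo_subset_Icc_self ht)).deriv]
      exact hle t ht)
  have hab' : a ≤ b := hx.1.le.trans hx.2.le
  have hline : ∀ t ∈ Icc a b, f t = f a + C * (t - a) := fun t ht => by
    have h₁ := hmvt a (left_mem_Icc.2 hab') t ht ht.1
    have h₂ := hmvt t ht b (right_mem_Icc.2 hab') ht.2
    linarith
  have hC : HasDerivAt f C x := by
    have hl : HasDerivAt (fun t => f a + C * (t - a)) C x := by
      simpa using ((hasDerivAt_id x).sub_const a).const_mul C |>.const_add (f a)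
    exact hl.congr_of_eventuallyEq
      (Filter.eventually_of_mem (Icc_mem_nhds hx.1 hx.2) hline)
  exact (hf x (Ioo_subset_Icc_self hx)).unique hC

lemma exists_isOpen_nearest_closedBall_subset {α : Type*} [PseudoMetricSpace α] [ProperSpace α]
    {s U : Set α} (hs : IsClosed s) (hU : IsOpen U) (hsU : s ⊆ U) :
    ∃ V, IsOpen V ∧ s ⊆ V ∧
      ∀ z ∈ V, ∃ p ∈ s, infDist z s = dist z p ∧ closedBall z (dist z p) ⊆ U := by
  have hr : ∀ p ∈ s, ∃ r > 0, ball p (2 * r) ⊆ U := fun p hp => by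
    obtain ⟨ε, hε, hball⟩ := Metric.isOpen_iff.1 hU p (hsU hp)
    exact ⟨ε / 2, half_pos hε, by rwa [mul_div_cancel₀ ε two_ne_zero]⟩
  choose! r hr0 hrU using hr
  refine ⟨⋃ p ∈ s, ball p (r p), isOpen_biUnion fun _ _ => isOpen_ball,
    fun p hp => mem_biUnion hp (mem_ball_self (hr0 p hp)), fun z hz => ?_⟩
  obtain ⟨p₀, hp₀, hzp₀⟩ := mem_iUnion₂.1 hz
  obtain ⟨p, hp, hzp⟩ := hs.exists_infDist_eq_dist ⟨p₀, hp₀⟩ z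
  refine ⟨p, hp, hzp, fun x hx => hrU p₀ hp₀ ?_⟩
  have hpp₀ : dist z p ≤ dist z p₀ := hzp ▸ infDist_le_dist_of_mem hp₀
  rw [mem_closedBall] at hx
  rw [mem_ball] at hzp₀ ⊢
  linarith [dist_triangle x z p₀]

section UnitGradient

variable {F : Type*} [NormedAddCommGroup F] [InnerProductSpace ℝ F]

lemma fderiv_inner_fderiv_apply {g : F → F} {y : F} (hg : DifferentiableAt ℝ (fderiv ℝ g) y)
    (v w d : F) :
    fderiv ℝ (fun x => ⟪fderiv ℝ g x v, w⟫) y d = ⟪fderiv ℝ (fderiv ℝ g) y d v, w⟫ := by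
  rw [fderiv_inner_apply ℝ (hg.clm_apply (differentiableAt_const v)) (differentiableAt_const w),
    fderiv_clm_apply hg (differentiableAt_const v)]
  simp

lemma inner_fderiv_apply_self_eq_zero {g : F → F} {y : F} (hg : ∀ᶠ x in 𝓝 y, ‖g x‖ = 1)
    (hd : DifferentiableAt ℝ g y) (v : F) : ⟪fderiv ℝ g y v, g y⟫ = 0 := by
  have hconst : (fun x => ⟪g x, g x⟫) =ᶠ[𝓝 y] fun _ => (1 : ℝ) := by
    filter_upwards [hg] with x hx
    rw [real_inner_self_eq_norm_sq, hx, one_pow]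
  have h := congrArg (· v) (hconst.fderiv_eq (𝕜 := ℝ))
  simp only [fderiv_inner_apply ℝ hd hd, fderiv_const_apply, zero_apply,
    real_inner_comm (fderiv ℝ g y v) (g y)] at h
  linarith

variable [CompleteSpace F] {δ : F → ℝ} {y : F}

lemma contDiffAt_gradient {m : ℕ} (hδ : ContDiffAt ℝ (m + 1) δ y) :
    ContDiffAt ℝ m (gradient δ) y :=
  (InnerProductSpace.toDual ℝ F).symm.toContinuousLinearEquiv.contDiff.contDiffAt.comp y
    (hδ.fderiv_right le_rfl)

lemma inner_fderiv_gradient (hδ : DifferentiableAt ℝ (fderiv ℝ δ) y) (v w : F) :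
    ⟪fderiv ℝ (gradient δ) y v, w⟫ = fderiv ℝ (fderiv ℝ δ) y v w := by
  have : HasFDerivAt (gradient δ)
      ((InnerProductSpace.toDual ℝ F).symm.toContinuousLinearEquiv.toContinuousLinearMap.comp
        (fderiv ℝ (fderiv ℝ δ) y)) y :=
    (InnerProductSpace.toDual ℝ F).symm.toContinuousLinearEquiv.hasFDerivAt.comp y hδ.hasFDerivAt
  rw [this.fderiv]
  exact InnerProductSpace.toDual_symm_apply

lemma norm_gradient (x : F) : ‖gradient δ x‖ = ‖fderiv ℝ δ x‖ :=
  (InnerProductSpace.toDual ℝ F).symm.norm_map _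

lemma inner_fderiv_fderiv_gradient_gradient {U : Set F} (hU : IsOpen U)
    (hδ : ContDiffOn ℝ 3 δ U) (hnorm : ∀ x ∈ U, ‖fderiv ℝ δ x‖ = 1) (hy : y ∈ U) (W : F) :
    ⟪fderiv ℝ (fderiv ℝ (gradient δ)) y (gradient δ y) W, W⟫ =
      -‖fderiv ℝ (gradient δ) y W‖ ^ 2 := by
  set g := gradient δ
  have hδU : ∀ x ∈ U, ContDiffAt ℝ 3 δ x := fun x hx => hδ.contDiffAt (hU.mem_nhds hx)
  have hgU : ∀ x ∈ U, ContDiffAt ℝ 2 g x := fun x hx => contDiffAt_gradient (hδU x hx)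
  have hH : DifferentiableAt ℝ (fderiv ℝ g) y :=
    ((hgU y hy).fderiv_right (m := 1) le_rfl).differentiableAt one_ne_zero
  have hsym : ∀ x ∈ U, ∀ v w, ⟪fderiv ℝ g x v, w⟫ = ⟪fderiv ℝ g x w, v⟫ := by
    intro x hx v w
    have hδ' : DifferentiableAt ℝ (fderiv ℝ δ) x :=
      ((hδU x hx).fderiv_right (m := 2) le_rfl).differentiableAt (by norm_num)
    rw [inner_fderiv_gradient hδ', inner_fderiv_gradient hδ']
    exact (hδU x hx).isSymmSndFDerivAt (by norm_num) v w
  have hker : ∀ x ∈ U, ∀ v, ⟪fderiv ℝ g x v, g x⟫ = 0 := by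
    intro x hx v
    refine inner_fderiv_apply_self_eq_zero ?_ ((hgU x hx).differentiableAt (by norm_num)) v
    filter_upwards [hU.mem_nhds hx] with x' hx'
    rw [norm_gradient, hnorm x' hx']
  -- differentiate the symmetry of `fderiv ℝ g` and the identity `hker` at `y`
  have h₁ : ⟪fderiv ℝ (fderiv ℝ g) y W (g y), W⟫ = ⟪fderiv ℝ (fderiv ℝ g) y W W, g y⟫ := by
    have hev : (fun x => ⟪fderiv ℝ g x (g y), W⟫) =ᶠ[𝓝 y] fun x => ⟪fderiv ℝ g x W, g y⟫ := by
      filter_upwards [hU.mem_nhds hy] with x hx using hsym x hx _ _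
    have := congrArg (· W) (hev.fderiv_eq (𝕜 := ℝ))
    simpa only [fderiv_inner_fderiv_apply hH] using this
  have h₂ : ⟪fderiv ℝ (fderiv ℝ g) y W W, g y⟫ = -‖fderiv ℝ g y W‖ ^ 2 := by
    have hev : (fun x => ⟪fderiv ℝ g x W, g x⟫) =ᶠ[𝓝 y] fun _ => (0 : ℝ) := by
      filter_upwards [hU.mem_nhds hy] with x hx using hker x hx W
    have := congrArg (· W) (hev.fderiv_eq (𝕜 := ℝ))
    simp only [fderiv_inner_apply ℝ (hH.clm_apply (differentiableAt_const W))
      ((hgU y hy).differentiableAt (by norm_num)), fderiv_clm_apply hH (differentiableAt_const W),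
      ContinuousLinearMap.comp_zero, zero_add,
      ContinuousLinearMap.flip_apply, fderiv_const_apply, zero_apply,
      real_inner_self_eq_norm_sq] at this
    linarith
  rw [← h₂, ← h₁, ((hgU y hy).isSymmSndFDerivAt (by simp)) (g y) W]

open AffineMap in
lemma norm_smul_gradient_lineMap {U : Set F} (hU : IsOpen U) (hδ : DifferentiableOn ℝ δ U)
    (hnorm : ∀ x ∈ U, ‖fderiv ℝ δ x‖ = 1) {z p : F} (hseg : segment ℝ z p ⊆ U)
    (hzp : δ p - δ z = dist z p) {s : ℝ} (hs : s ∈ Ioo (0 : ℝ) 1) :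
    ‖p - z‖ • gradient δ (lineMap z p s) = p - z := by
  have hγ : ∀ t ∈ Icc (0 : ℝ) 1, lineMap z p t ∈ U := fun t ht =>
    hseg (lineMap_mem_segment ℝ z p ht)
  have hderiv : ∀ t ∈ Icc (0 : ℝ) 1, HasDerivAt (fun t => δ (lineMap z p t))
      (fderiv ℝ δ (lineMap z p t) (p - z)) t := fun t ht =>
    (hδ.differentiableAt (hU.mem_nhds (hγ t ht))).hasFDerivAt.comp_hasDerivAt t
      AffineMap.hasDerivAt_lineMap
  have hle : ∀ t ∈ Ioo (0 : ℝ) 1, fderiv ℝ δ (lineMap z p t) (p - z) ≤ ‖p - z‖ := fun t ht =>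
    (le_abs_self _).trans <| ((fderiv ℝ δ _).le_opNorm (p - z)).trans_eq <| by
      rw [hnorm _ (hγ t (Ioo_subset_Icc_self ht)), one_mul]
  have hs' := hasDerivAt_eq_of_le_of_sub_eq hderiv hle
    (by simp [lineMap_apply_zero, lineMap_apply_one, hzp, dist_eq_norm, norm_sub_rev]) hs
  have hunit : ‖gradient δ (lineMap z p s)‖ = 1 := by
    rw [norm_gradient, hnorm _ (hγ s (Ioo_subset_Icc_self hs))]
  rw [← inner_gradient_left, ← one_mul ‖p - z‖, ← hunit, inner_eq_norm_mul_iff_real, hunit,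
    one_smul] at hs'
  exact hs'

open AffineMap in
lemma hessian_apply_le_of_sub_eq_dist {U : Set F} (hU : IsOpen U) (hδ : ContDiffOn ℝ 3 δ U)
    (hnorm : ∀ x ∈ U, ‖fderiv ℝ δ x‖ = 1) {z p : F} (hseg : segment ℝ z p ⊆ U)
    (hzp : δ p - δ z = dist z p) (W : F) :
    fderiv ℝ (fderiv ℝ δ) p W W ≤ fderiv ℝ (fderiv ℝ δ) z W W := by
  set g := gradient δ
  have hγ : ∀ t ∈ Icc (0 : ℝ) 1, lineMap z p t ∈ U := fun t ht =>
    hseg (lineMap_mem_segment ℝ z p ht)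
  have hδU : ∀ x ∈ U, ContDiffAt ℝ 3 δ x := fun x hx => hδ.contDiffAt (hU.mem_nhds hx)
  have hH : ∀ x ∈ U, DifferentiableAt ℝ (fderiv ℝ g) x := fun x hx =>
    ((contDiffAt_gradient (hδU x hx)).fderiv_right (m := 1) le_rfl).differentiableAt one_ne_zero
  have hderiv : ∀ t ∈ Icc (0 : ℝ) 1, HasDerivAt (fun t => ⟪fderiv ℝ g (lineMap z p t) W, W⟫)
      ⟪fderiv ℝ (fderiv ℝ g) (lineMap z p t) (p - z) W, W⟫ t := by
    intro t ht
    have hd : DifferentiableAt ℝ (fun x => ⟪fderiv ℝ g x W, W⟫) (lineMap z p t) :=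
      ((hH _ (hγ t ht)).clm_apply (differentiableAt_const W)).inner ℝ (differentiableAt_const W)
    have := hd.hasFDerivAt.comp_hasDerivAt t AffineMap.hasDerivAt_lineMap
    rwa [fderiv_inner_fderiv_apply (hH _ (hγ t ht))] at this
  have hanti : AntitoneOn (fun t : ℝ => ⟪fderiv ℝ g (lineMap z p t) W, W⟫) (Icc 0 1) := by
    refine antitoneOn_of_hasDerivWithinAt_nonpos (convex_Icc 0 1)
      (fun t ht => (hderiv t ht).continuousAt.continuousWithinAt)
      (fun t ht => (hderiv t (interior_subset ht)).hasDerivWithinAt) fun t ht => ?_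
    rw [interior_Icc] at ht
    rw [← norm_smul_gradient_lineMap hU (hδ.differentiableOn (by norm_num)) hnorm hseg hzp ht,
      map_smul, smul_apply, real_inner_smul_left,
      inner_fderiv_fderiv_gradient_gradient hU hδ hnorm (hγ t (Ioo_subset_Icc_self ht))]
    exact mul_nonpos_of_nonneg_of_nonpos (norm_nonneg _) (neg_nonpos.2 (sq_nonneg _))
  have h01 := hanti (left_mem_Icc.2 zero_le_one) (right_mem_Icc.2 zero_le_one) zero_le_one
  have hδ' : ∀ x ∈ U, DifferentiableAt ℝ (fderiv ℝ δ) x := fun x hx =>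
    ((hδU x hx).fderiv_right (m := 2) le_rfl).differentiableAt (by norm_num)
  simp only [lineMap_apply_zero, lineMap_apply_one] at h01
  rwa [inner_fderiv_gradient (hδ' z (hseg (left_mem_segment ℝ z p))),
    inner_fderiv_gradient (hδ' p (hseg (right_mem_segment ℝ z p)))] at h01

end UnitGradient

theorem signed_distance_psh_inside_general {n : ℕ} (Ω : Set (EuclideanSpace ℂ (Fin n)))
    (hsmooth : HasSmoothBoundary Ω)
    (hpsh : ∀ z ∈ frontier Ω, ∀ V : EuclideanSpace ℂ (Fin n),
      fderiv ℝ (sdist Ω) z V = 0 → 0 ≤ (cHess (fun w => ((sdist Ω w : ℝ) : ℂ)) z V V).re) :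
    ∃ U : Set (EuclideanSpace ℂ (Fin n)), IsOpen U ∧ frontier Ω ⊆ U ∧
      ∀ z ∈ U ∩ Ω, ∀ V : EuclideanSpace ℂ (Fin n), 0 ≤ (cHess (fun w => ((sdist Ω w : ℝ) : ℂ)) z V V).re := by
  obtain ⟨U', hU', hbU', hδ, hnorm⟩ := hsmooth
  have hδ₃ : ContDiffOn ℝ 3 (sdist Ω) U' := hδ.of_le (WithTop.coe_le_coe.2 le_top)
  have hδ₂ : ∀ x ∈ U', ContDiffAt ℝ 2 (sdist Ω) x := fun x hx =>
    (hδ₃.contDiffAt (hU'.mem_nhds hx)).of_le (by norm_num)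
  obtain ⟨U, hU, hbU, hnear⟩ := exists_isOpen_nearest_closedBall_subset isClosed_frontier hU' hbU'
  refine ⟨U, hU, hbU, fun z ⟨hzU, hzΩ⟩ V => ?_⟩
  obtain ⟨p, hp, hzp, hball⟩ := hnear z hzU
  have hseg : segment ℝ z p ⊆ U' :=
    ((convex_closedBall z _).segment_subset (mem_closedBall_self dist_nonneg)
      (mem_closedBall.2 (dist_comm p z).le)).trans hball
  have hincr : sdist Ω p - sdist Ω z = dist z p := by
    simp [sdist, hzΩ, hzp, infDist_zero_of_mem hp]
  have hleviₚ : 0 ≤ leviQuadratic (fderiv ℝ (fderiv ℝ (sdist Ω)) p) V := by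
    refine leviQuadratic_nonneg_of_nonneg_on_ker ((hδ₂ p (hbU' hp)).isSymmSndFDerivAt (by simp))
      (fderiv ℝ (sdist Ω) p) (fun W hW => ?_) V
    have := hpsh p hp W hW
    rw [re_cHess_ofReal (hδ₂ p (hbU' hp))] at this
    linarith
  have hV := hessian_apply_le_of_sub_eq_dist hU' hδ₃ hnorm hseg hincr V
  have hIV := hessian_apply_le_of_sub_eq_dist hU' hδ₃ hnorm hseg hincr (I • V)
  rw [re_cHess_ofReal (hδ₂ z (hball (mem_closedBall_self dist_nonneg)))]
  unfold leviQuadratic at hleviₚ ⊢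
  linarith

/-- If the complex Hessian of `δ` is nonnegative on the real tangent space at each
boundary point, then `δ` is plurisubharmonic on `U ∩ Ω` for some neighborhood `U` of `bΩ`. -/
theorem signed_distance_psh_inside {n : ℕ} (Ω : Set (EuclideanSpace ℂ (Fin n)))
    (hopen : IsOpen Ω) (hconn : IsConnected Ω) (hbdd : Bornology.IsBounded Ω)
    (hsmooth : HasSmoothBoundary Ω)
    (hpsh : ∀ z ∈ frontier Ω, ∀ V : EuclideanSpace ℂ (Fin n),
      fderiv ℝ (sdist Ω) z V = 0 → 0 ≤ (cHess (fun w => ((sdist Ω w : ℝ) : ℂ)) z V V).re) :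
    ∃ U : Set (EuclideanSpace ℂ (Fin n)), IsOpen U ∧ frontier Ω ⊆ U ∧
      ∀ z ∈ U ∩ Ω, ∀ V : EuclideanSpace ℂ (Fin n), 0 ≤ (cHess (fun w => ((sdist Ω w : ℝ) : ℂ)) z V V).re :=
  signed_distance_psh_inside_general Ω hsmooth hpsh
end
end
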